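/- For every r ∈ (1/2, 1), the function Ψ_r : [0,∞)² → [0,∞) defined by Ψ_r(x,y) = (√x − √y)^{2r} ((x+y)/2)^{1−r} is convex and positively 1-homogeneous (Ψ_r(tx,ty) = t Ψ_r(x,y) for all t ≥ 0). -/

import Mathlib

/-!
`Ψ_r` is positively 1-homogeneous, so convexity is the same as subadditivity. Putting
`u = (x - y) / (x + y) ∈ [-1, 1]` gives `Ψ_r(x, y) = 2^(r-1) (x + y) h(u)` with
`h(u) = (1 - √(1 - u²))^r`: up to a constant, `Ψ_r` is the perspective of `h`, and subadditivity
follows from the convexity of `h` on `[-1, 1]`. As `h` is even and increasing on `[0, 1]`, it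
suffices that `h'` increases on `(0, 1)`. With `s = √(1 - u²)`, which decreases in `u`,
`h'(u)² = r² (1 - s)^(2r-1) (s⁻² + s⁻¹)`, and this decreases in `s` precisely because `2r - 1 ≥ 0`.
-/

open MeasureTheory ENNReal

noncomputable section

/-- `Ψ_r(x,y) = (√x - √y)^{2r} ((x+y)/2)^{1-r}`. -/
def Psir (r x y : ℝ) : ℝ :=
  ((Real.sqrt x - Real.sqrt y)^2) ^ r * ((x+y)/2) ^ (1-r)

open Set Real

section ConvexityCriteria

variable {𝕜 E : Type*}

theorem convexOn_of_add_le_of_smul_le [CommSemiring 𝕜] [PartialOrder 𝕜] [IsOrderedRing 𝕜]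
    [AddCommMonoid E] [Module 𝕜 E] {s : Set E} {f : E → 𝕜} (hs : Convex 𝕜 s)
    (hs_smul : ∀ x ∈ s, ∀ c : 𝕜, 0 ≤ c → c • x ∈ s)
    (hf_add : ∀ x ∈ s, ∀ y ∈ s, f (x + y) ≤ f x + f y)
    (hf_smul : ∀ x ∈ s, ∀ c : 𝕜, 0 ≤ c → f (c • x) ≤ c * f x) : ConvexOn 𝕜 s f :=
  ⟨hs, fun x hx y hy a b ha hb _ =>
    (hf_add _ (hs_smul x hx a ha) _ (hs_smul y hy b hb)).trans
      (add_le_add (hf_smul x hx a ha) (hf_smul y hy b hb))⟩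

theorem ConvexOn.perspective_add_le [Field 𝕜] [LinearOrder 𝕜] [IsStrictOrderedRing 𝕜]
    [AddCommGroup E] [Module 𝕜 E] {s : Set E} {g : E → 𝕜} (hg : ConvexOn 𝕜 s g)
    {t₁ t₂ : 𝕜} (ht₁ : 0 < t₁) (ht₂ : 0 < t₂) {x₁ x₂ : E}
    (hx₁ : t₁⁻¹ • x₁ ∈ s) (hx₂ : t₂⁻¹ • x₂ ∈ s) :
    (t₁ + t₂) * g ((t₁ + t₂)⁻¹ • (x₁ + x₂)) ≤ t₁ * g (t₁⁻¹ • x₁) + t₂ * g (t₂⁻¹ • x₂) := by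
  have ht : 0 < t₁ + t₂ := add_pos ht₁ ht₂
  have hcomb : (t₁ / (t₁ + t₂)) • (t₁⁻¹ • x₁) + (t₂ / (t₁ + t₂)) • (t₂⁻¹ • x₂) =
      (t₁ + t₂)⁻¹ • (x₁ + x₂) := by
    rw [smul_smul, smul_smul, smul_add]
    congr 2 <;> field_simp
  have hconv := hg.2 hx₁ hx₂ (div_nonneg ht₁.le ht.le) (div_nonneg ht₂.le ht.le)
    (by field_simp)
  rw [hcomb, smul_eq_mul, smul_eq_mul] at hconv
  calc (t₁ + t₂) * g ((t₁ + t₂)⁻¹ • (x₁ + x₂))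
      ≤ (t₁ + t₂) * (t₁ / (t₁ + t₂) * g (t₁⁻¹ • x₁) + t₂ / (t₁ + t₂) * g (t₂⁻¹ • x₂)) := by
        gcongr
    _ = t₁ * g (t₁⁻¹ • x₁) + t₂ * g (t₂⁻¹ • x₂) := by field_simp

theorem ConvexOn.comp_abs {a : ℝ} {g : ℝ → ℝ} (hg : ConvexOn ℝ (Icc 0 a) g)
    (hg_mono : MonotoneOn g (Icc 0 a)) : ConvexOn ℝ (Icc (-a) a) fun x => g |x| := by
  have himage : (fun x : ℝ => |x|) '' Icc (-a) a = Icc 0 a := by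
    ext y
    constructor
    · rintro ⟨x, hx, rfl⟩
      exact ⟨abs_nonneg x, abs_le.2 hx⟩
    · intro hy
      exact ⟨y, ⟨by linarith [hy.1, hy.2], hy.2⟩, abs_of_nonneg hy.1⟩
  have habs : ConvexOn ℝ (Icc (-a) a) fun x : ℝ => |x| :=
    ⟨convex_Icc (-a) a, fun x _ y _ b c hb hc _ => by
      simpa only [smul_eq_mul, abs_mul, abs_of_nonneg hb, abs_of_nonneg hc] using
        abs_add_le (b * x) (c * y)⟩
  refine ConvexOn.comp (g := g) ?_ habs ?_ <;> rw [himage]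
  exacts [hg, hg_mono]

end ConvexityCriteria

theorem Psir_zero_zero (r : ℝ) : Psir r 0 0 = 0 := by
  rcases eq_or_ne r 0 with rfl | hr
  · simp [Psir]
  · simp [Psir, zero_rpow hr]

theorem Psir_mul (r : ℝ) {t x y : ℝ} (ht : 0 ≤ t) (hx : 0 ≤ x) (hy : 0 ≤ y) :
    Psir r (t * x) (t * y) = t * Psir r x y := by
  rcases ht.eq_or_lt with rfl | ht
  · simp [Psir_zero_zero]
  have hsq : (√(t * x) - √(t * y)) ^ 2 = t * (√x - √y) ^ 2 := by
    rw [sqrt_mul ht.le, sqrt_mul ht.le, ← mul_sub, mul_pow, sq_sqrt ht.le]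
  have hmean : (t * x + t * y) / 2 = t * ((x + y) / 2) := by ring
  rw [Psir, Psir, hsq, hmean, mul_rpow ht.le (sq_nonneg _), mul_rpow ht.le (by positivity)]
  calc t ^ r * ((√x - √y) ^ 2) ^ r * (t ^ (1 - r) * ((x + y) / 2) ^ (1 - r))
      = t ^ (r + (1 - r)) * (((√x - √y) ^ 2) ^ r * ((x + y) / 2) ^ (1 - r)) := by
        rw [rpow_add ht]; ring
    _ = t * (((√x - √y) ^ 2) ^ r * ((x + y) / 2) ^ (1 - r)) := by
        rw [add_sub_cancel, Real.rpow_one]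

def psiProfile (r u : ℝ) : ℝ := (1 - √(1 - u ^ 2)) ^ r

theorem sqrt_one_sub_sq_le_one (u : ℝ) : √(1 - u ^ 2) ≤ 1 :=
  sqrt_le_one.2 (by nlinarith [sq_nonneg u])

theorem psiProfile_abs (r u : ℝ) : psiProfile r |u| = psiProfile r u := by
  rw [psiProfile, psiProfile, sq_abs]

theorem monotoneOn_psiProfile {r : ℝ} (hr : 0 ≤ r) : MonotoneOn (psiProfile r) (Icc 0 1) := by
  intro u hu v hv huv
  have hsqrt : √(1 - v ^ 2) ≤ √(1 - u ^ 2) := sqrt_le_sqrt (by nlinarith [hu.1])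
  exact rpow_le_rpow (by linarith [sqrt_one_sub_sq_le_one u]) (by linarith) hr

theorem continuous_psiProfile {r : ℝ} (hr : 0 ≤ r) : Continuous (psiProfile r) :=
  (continuous_rpow_const hr).comp (by fun_prop)

theorem sqrt_one_sub_sq_mem_Ioo {u : ℝ} (hu : u ∈ Ioo 0 1) : √(1 - u ^ 2) ∈ Ioo 0 1 := by
  obtain ⟨hu0, hu1⟩ := hu
  exact ⟨sqrt_pos.2 (by nlinarith), (sqrt_lt' one_pos).2 (by nlinarith)⟩

theorem hasDerivAt_psiProfile (r : ℝ) {u : ℝ} (hu : u ∈ Ioo 0 1) :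
    HasDerivAt (psiProfile r)
      (r * (1 - √(1 - u ^ 2)) ^ (r - 1) * (u / √(1 - u ^ 2))) u := by
  have hs := sqrt_one_sub_sq_mem_Ioo hu
  have hsqrt : HasDerivAt (fun v => √(1 - v ^ 2)) (1 / (2 * √(1 - u ^ 2)) * -(2 * u)) u :=
    (hasDerivAt_sqrt (sqrt_pos.1 hs.1).ne').comp u
      (by simpa using (hasDerivAt_pow 2 u).const_sub 1)
  have hrpow := (hasDerivAt_rpow_const (p := r) (Or.inl (sub_pos.2 hs.2).ne')).comp u
    (hsqrt.const_sub 1)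
  refine hrpow.congr_deriv ?_
  field_simp

theorem sq_mul_rpow_mul_div {r s u : ℝ} (hs : s ∈ Ioo 0 1) (hu : u ^ 2 = 1 - s ^ 2) :
    (r * (1 - s) ^ (r - 1) * (u / s)) ^ 2 = r ^ 2 * ((1 - s) ^ (2 * r - 1) * (s⁻¹ ^ 2 + s⁻¹)) := by
  have h1s : 0 < 1 - s := sub_pos.2 hs.2
  have hpow : ((1 - s) ^ (r - 1)) ^ 2 * (1 - s) = (1 - s) ^ (2 * r - 1) := by
    rw [← Real.rpow_natCast, ← rpow_mul h1s.le, ← rpow_add_one h1s.ne']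
    congr 1
    push_cast
    ring
  have hu' : u ^ 2 = (1 - s) * (1 + s) := by rw [hu]; ring
  have hs_ne := hs.1.ne'
  rw [← hpow]
  field_simp
  rw [hu']
  ring

theorem monotoneOn_deriv_psiProfile {r : ℝ} (hr : 1 / 2 ≤ r) :
    MonotoneOn (deriv (psiProfile r)) (Ioo 0 1) := by
  have hderiv : ∀ w ∈ Ioo (0 : ℝ) 1, 0 ≤ deriv (psiProfile r) w ∧
      deriv (psiProfile r) w ^ 2 = r ^ 2 * ((1 - √(1 - w ^ 2)) ^ (2 * r - 1) *
        ((√(1 - w ^ 2))⁻¹ ^ 2 + (√(1 - w ^ 2))⁻¹)) := by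
    intro w hw
    obtain ⟨hs0, hs1⟩ := sqrt_one_sub_sq_mem_Ioo hw
    have hw0 := hw.1
    have h1s : 0 < 1 - √(1 - w ^ 2) := sub_pos.2 hs1
    rw [(hasDerivAt_psiProfile r hw).deriv]
    refine ⟨by positivity, sq_mul_rpow_mul_div ⟨hs0, hs1⟩ ?_⟩
    rw [sq_sqrt (by nlinarith [hw.2])]
    ring
  intro u hu v hv huv
  obtain ⟨hu_nonneg, hu_sq⟩ := hderiv u hu
  obtain ⟨hv_nonneg, hv_sq⟩ := hderiv v hv
  have hsv0 : 0 < √(1 - v ^ 2) := (sqrt_one_sub_sq_mem_Ioo hv).1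
  have h1su : 0 ≤ 1 - √(1 - u ^ 2) := sub_nonneg.2 (sqrt_one_sub_sq_le_one u)
  have h1sv : 0 ≤ 1 - √(1 - v ^ 2) := sub_nonneg.2 (sqrt_one_sub_sq_le_one v)
  have hsvu : √(1 - v ^ 2) ≤ √(1 - u ^ 2) := sqrt_le_sqrt (by nlinarith [hu.1])
  rw [← sq_le_sq₀ hu_nonneg hv_nonneg, hu_sq, hv_sq]
  gcongr
  linarith

theorem convexOn_psiProfile {r : ℝ} (hr : 1 / 2 ≤ r) : ConvexOn ℝ (Icc (-1) 1) (psiProfile r) := by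
  have hr0 : 0 ≤ r := by linarith
  have hconv : ConvexOn ℝ (Icc 0 1) (psiProfile r) := by
    refine MonotoneOn.convexOn_of_deriv (convex_Icc 0 1) (continuous_psiProfile hr0).continuousOn
      ?_ ?_ <;> rw [interior_Icc]
    · exact fun u hu => (hasDerivAt_psiProfile r hu).differentiableAt.differentiableWithinAt
    · exact monotoneOn_deriv_psiProfile hr
  simpa only [psiProfile_abs] using hconv.comp_abs (monotoneOn_psiProfile hr0)

theorem Psir_half_one_add_half_one_sub (r : ℝ) {u : ℝ} (hu : u ∈ Icc (-1) 1) :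
    Psir r ((1 + u) / 2) ((1 - u) / 2) = (1 / 2) ^ (1 - r) * psiProfile r u := by
  obtain ⟨hu₁, hu₂⟩ := hu
  have hsq : (√((1 + u) / 2) - √((1 - u) / 2)) ^ 2 = 1 - √(1 - u ^ 2) := by
    rw [sub_sq, sq_sqrt (by linarith), sq_sqrt (by linarith), mul_assoc, ← sqrt_mul (by linarith),
      show (1 + u) / 2 * ((1 - u) / 2) = (1 - u ^ 2) / 2 ^ 2 by ring, sqrt_div' _ (by norm_num),
      sqrt_sq (by norm_num)]
    ring
  rw [Psir, psiProfile, hsq, show ((1 + u) / 2 + (1 - u) / 2) / 2 = 1 / 2 by ring, mul_comm]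

theorem inv_add_mul_sub_mem_Icc {x y : ℝ} (hx : 0 ≤ x) (hy : 0 ≤ y) (hxy : 0 < x + y) :
    (x + y)⁻¹ * (x - y) ∈ Icc (-1) 1 := by
  rw [← div_eq_inv_mul, mem_Icc, le_div_iff₀ hxy, div_le_one hxy]
  constructor <;> linarith

theorem Psir_eq_mul_psiProfile (r : ℝ) {x y : ℝ} (hx : 0 ≤ x) (hy : 0 ≤ y) (hxy : 0 < x + y) :
    Psir r x y = (1 / 2) ^ (1 - r) * ((x + y) * psiProfile r ((x + y)⁻¹ * (x - y))) := by
  set u := (x + y)⁻¹ * (x - y) with hu_def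
  have hu : u ∈ Icc (-1) 1 := inv_add_mul_sub_mem_Icc hx hy hxy
  have hx' : (x + y) * ((1 + u) / 2) = x := by rw [hu_def]; field_simp; ring
  have hy' : (x + y) * ((1 - u) / 2) = y := by rw [hu_def]; field_simp; ring
  calc Psir r x y = Psir r ((x + y) * ((1 + u) / 2)) ((x + y) * ((1 - u) / 2)) := by
        rw [hx', hy']
    _ = (1 / 2) ^ (1 - r) * ((x + y) * psiProfile r u) := by
        rw [Psir_mul r hxy.le (by linarith [hu.1]) (by linarith [hu.2]),
          Psir_half_one_add_half_one_sub r hu]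
        ring

theorem Psir_add_le {r : ℝ} (hr : 1 / 2 ≤ r) {x₁ y₁ x₂ y₂ : ℝ} (hx₁ : 0 ≤ x₁) (hy₁ : 0 ≤ y₁)
    (hx₂ : 0 ≤ x₂) (hy₂ : 0 ≤ y₂) :
    Psir r (x₁ + x₂) (y₁ + y₂) ≤ Psir r x₁ y₁ + Psir r x₂ y₂ := by
  rcases (add_nonneg hx₁ hy₁).eq_or_lt with h₁ | h₁
  · obtain ⟨rfl, rfl⟩ : x₁ = 0 ∧ y₁ = 0 := ⟨by linarith, by linarith⟩
    simp [Psir_zero_zero]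
  rcases (add_nonneg hx₂ hy₂).eq_or_lt with h₂ | h₂
  · obtain ⟨rfl, rfl⟩ : x₂ = 0 ∧ y₂ = 0 := ⟨by linarith, by linarith⟩
    simp [Psir_zero_zero]
  have hpersp := (convexOn_psiProfile hr).perspective_add_le h₁ h₂
    (inv_add_mul_sub_mem_Icc hx₁ hy₁ h₁) (inv_add_mul_sub_mem_Icc hx₂ hy₂ h₂)
  rw [Psir_eq_mul_psiProfile r hx₁ hy₁ h₁, Psir_eq_mul_psiProfile r hx₂ hy₂ h₂,
    Psir_eq_mul_psiProfile r (by positivity) (by positivity) (by linarith), ← mul_add]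
  refine mul_le_mul_of_nonneg_left ?_ (by positivity)
  rwa [show x₁ + x₂ + (y₁ + y₂) = x₁ + y₁ + (x₂ + y₂) by ring,
    show x₁ + x₂ - (y₁ + y₂) = x₁ - y₁ + (x₂ - y₂) by ring]

theorem convexOn_Psir {r : ℝ} (hr : 1 / 2 ≤ r) :
    ConvexOn ℝ (Ici (0 : ℝ) ×ˢ Ici (0 : ℝ)) fun p : ℝ × ℝ => Psir r p.1 p.2 := by
  refine convexOn_of_add_le_of_smul_le ((convex_Ici 0).prod (convex_Ici 0)) ?_ ?_ ?_
  · rintro ⟨x, y⟩ ⟨hx, hy⟩ c hc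
    exact ⟨mul_nonneg hc hx, mul_nonneg hc hy⟩
  · rintro ⟨x₁, y₁⟩ ⟨hx₁, hy₁⟩ ⟨x₂, y₂⟩ ⟨hx₂, hy₂⟩
    exact Psir_add_le hr hx₁ hy₁ hx₂ hy₂
  · rintro ⟨x, y⟩ ⟨hx, hy⟩ c hc
    exact (Psir_mul r hc hx hy).le

/-- for `r ∈ (1/2,1)`, `Ψ_r` is convex on `[0,∞)²`
and positively 1-homogeneous. -/
theorem stmt_17 (r : ℝ) (hr : r ∈ Set.Ioo (1/2 : ℝ) 1) :
    ConvexOn ℝ (Set.Ici (0:ℝ) ×ˢ Set.Ici (0:ℝ)) (fun p : ℝ × ℝ => Psir r p.1 p.2)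
    ∧ ∀ t : ℝ, 0 ≤ t → ∀ x : ℝ, 0 ≤ x → ∀ y : ℝ, 0 ≤ y →
        Psir r (t*x) (t*y) = t * Psir r x y :=
  ⟨convexOn_Psir hr.1.le, fun _ ht _ hx _ hy => Psir_mul r ht hx hy⟩

end
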